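/- Let f, g : ℝ → ℝ be continuous, t ∈ ℝ and H ∈ (0,1]. Suppose that for every ε ∈ (0,H) there exist C_ε > 0 and ρ_ε > 0 such that |f(u) − f(v)| ≤ C_ε |u − v|^{H−ε} + C_ε |g(u) − g(v)| for all u, v ∈ B(t,ρ_ε). Then the local parabolic Hausdorff dimensions of the graphs satisfy lim_{ρ→0⁺} dimH(Gr(f,[t−ρ,t+ρ]); ϱ_H) ≤ lim_{ρ→0⁺} dimH(Gr(g,[t−ρ,t+ρ]); ϱ_H). -/

import Mathlib

open Filter MeasureTheory Set Topology
open scoped ENNReal NNReal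

/-- The parabolic metric `ϱ_H((u,x),(v,y)) = max(|u−v|^H, |x−y|)` on `ℝ²`. -/
noncomputable def pDist (H : ℝ) (p q : ℝ × ℝ) : ℝ :=
  max (|p.1 - q.1| ^ H) |p.2 - q.2|

/-- Diameter of a set with respect to the parabolic metric `ϱ_H` (in `ℝ≥0∞`). -/
noncomputable def pDiam (H : ℝ) (S : Set (ℝ × ℝ)) : ℝ≥0∞ :=
  ⨆ (p : ℝ × ℝ) (_ : p ∈ S) (q : ℝ × ℝ) (_ : q ∈ S), ENNReal.ofReal (pDist H p q)

/-- `A` is null for the `s`-dimensional Hausdorff measure in the parabolic metric `ϱ_H`: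
for every `ε > 0` there is a countable cover of `A` by sets of `ϱ_H`-diameter at most `ε`
whose sum of `s`-th powers of diameters is less than `ε`. -/
def pNull (H s : ℝ) (A : Set (ℝ × ℝ)) : Prop :=
  ∀ ε : ℝ, 0 < ε → ∃ U : ℕ → Set (ℝ × ℝ), A ⊆ ⋃ n, U n ∧
    (∀ n, pDiam H (U n) ≤ ENNReal.ofReal ε) ∧
    (∑' n, pDiam H (U n) ^ s) < ENNReal.ofReal ε

/-- The Hausdorff dimension of `A ⊆ ℝ²` computed in the parabolic metric `ϱ_H`:
the infimum of the nonnegative exponents `s` for which the `s`-dimensional parabolic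
Hausdorff measure of `A` vanishes. -/
noncomputable def pDimH (H : ℝ) (A : Set (ℝ × ℝ)) : ℝ :=
  sInf {s : ℝ | 0 ≤ s ∧ pNull H s A}

/-- The graph of `f : ℝ → ℝ` over `V ⊆ ℝ`, as a subset of `ℝ²`. -/
def graphP (f : ℝ → ℝ) (V : Set ℝ) : Set (ℝ × ℝ) := {p | ∃ u ∈ V, p = (u, f u)}

/-- The local parabolic Hausdorff dimension of the graph of `f` at `t`:
`lim_{ρ→0⁺} dimH(Gr(f,[t−ρ,t+ρ]); ϱ_H)`; since the inner quantity is nondecreasing in `ρ`,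
the limit is the infimum over `ρ > 0`. -/
noncomputable def pDimGraphLoc (H : ℝ) (f : ℝ → ℝ) (t : ℝ) : ℝ :=
  sInf {x : ℝ | ∃ ρ > (0 : ℝ), x = pDimH H (graphP f (Icc (t - ρ) (t + ρ)))}


/-!
For `γ < 1`, the hypothesis with `ε = H (1 - γ)` makes the lift `(u, g u) ↦ (u, f u)` locally
`γ`-Hölder for `ϱ_H` near `t` at scales at most `1`: a cover of the graph of `g` by sets of
diameter `r_n` lifts to a cover of the graph of `f` by sets of diameter `≲ r_n ^ γ`, so
`γ · dimH Gr(f) ≤ dimH Gr(g)` on small intervals, and `γ → 1` gives the claim.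
The graph of the continuous `g` over a compact interval is bounded, so a grid cover shows that it
is null for some exponent; this keeps `pDimH` away from its junk value `sInf ∅ = 0`.
-/

section ParabolicDiameter

variable {H : ℝ}

lemma pDist_nonneg (p q : ℝ × ℝ) : 0 ≤ pDist H p q :=
  (Real.rpow_nonneg (abs_nonneg _) _).trans (le_max_left _ _)

lemma pDiam_le_of_forall {S : Set (ℝ × ℝ)} {c : ℝ≥0∞}
    (h : ∀ p ∈ S, ∀ q ∈ S, ENNReal.ofReal (pDist H p q) ≤ c) : pDiam H S ≤ c :=
  iSup₂_le fun p hp => iSup₂_le fun q hq => h p hp q hq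

lemma ofReal_pDist_le_pDiam {S : Set (ℝ × ℝ)} {p q : ℝ × ℝ} (hp : p ∈ S) (hq : q ∈ S) :
    ENNReal.ofReal (pDist H p q) ≤ pDiam H S :=
  le_iSup₂_of_le p hp (le_iSup₂_of_le q hq le_rfl)

@[simp]
lemma pDiam_empty : pDiam H ∅ = 0 := by
  simp [pDiam]

lemma pDiam_Icc_prod_Icc_le (hH : 0 ≤ H) (a b w h : ℝ) :
    pDiam H (Icc a (a + w) ×ˢ Icc b (b + h)) ≤ ENNReal.ofReal (max (w ^ H) h) := by
  refine pDiam_le_of_forall fun p ⟨⟨hp₁, hp₁'⟩, hp₂, hp₂'⟩ q ⟨⟨hq₁, hq₁'⟩, hq₂, hq₂'⟩ => ?_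
  have h₁ : |p.1 - q.1| ≤ w := abs_sub_le_iff.2 ⟨by linarith, by linarith⟩
  have h₂ : |p.2 - q.2| ≤ h := abs_sub_le_iff.2 ⟨by linarith, by linarith⟩
  exact ENNReal.ofReal_le_ofReal
    (max_le_max (Real.rpow_le_rpow (abs_nonneg _) h₁ hH) h₂)

end ParabolicDiameter

section ParabolicNull

variable {H s : ℝ} {A B : Set (ℝ × ℝ)}

lemma pNull.mono (h : pNull H s B) (hAB : A ⊆ B) : pNull H s A := fun ε hε =>
  let ⟨U, hcov, hdiam, hsum⟩ := h ε hε
  ⟨U, hAB.trans hcov, hdiam, hsum⟩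

lemma pNull_of_forall_finset_cover {ι : Type*} [Encodable ι] (hs : 0 < s)
    (h : ∀ ε > 0, ∃ (T : Finset ι) (V : ι → Set (ℝ × ℝ)), A ⊆ ⋃ i ∈ T, V i ∧
      (∀ i ∈ T, pDiam H (V i) ≤ ENNReal.ofReal ε) ∧
      ∑ i ∈ T, pDiam H (V i) ^ s < ENNReal.ofReal ε) :
    pNull H s A := by
  classical
  intro ε hε
  obtain ⟨T, V, hcov, hdiam, hsum⟩ := h ε hε
  set W : ι → Set (ℝ × ℝ) := fun i => if i ∈ T then V i else ∅
  have hW_zero : ∀ i ∉ T, pDiam H (W i) ^ s = 0 := fun i hi => by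
    simp [W, hi, ENNReal.zero_rpow_of_pos hs]
  refine ⟨fun n => ⋃ i ∈ Encodable.decode₂ ι n, W i, ?_, fun n => ?_, ?_⟩
  · rw [Encodable.iUnion_decode₂]
    exact hcov.trans (iUnion₂_subset fun i hi => subset_iUnion_of_subset i (by simp [W, hi]))
  · refine Encodable.iUnion_decode₂_cases (C := fun S => pDiam H S ≤ _) (by simp) fun i => ?_
    by_cases hi : i ∈ T <;> simp [W, hi, hdiam]
  · rw [tsum_iUnion_decode₂ (fun S => pDiam H S ^ s) (by simp [ENNReal.zero_rpow_of_pos hs]) W,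
      tsum_eq_sum hW_zero]
    exact (Finset.sum_congr rfl fun i hi => by simp [W, hi]).trans_lt hsum

lemma exists_mem_range_mem_Icc_mul {x L w : ℝ} (hw : 0 < w) (hx : 0 ≤ x) (hxL : x ≤ L) :
    ∃ i ∈ Finset.range (⌈L / w⌉₊ + 1), x ∈ Icc (i * w) (i * w + w) := by
  refine ⟨⌊x / w⌋₊, Finset.mem_range_succ_iff.2 ?_, ?_, ?_⟩
  · exact (Nat.floor_le_floor (div_le_div_of_nonneg_right hxL hw.le)).trans (Nat.floor_le_ceil _)
  · exact (le_div_iff₀ hw).1 (Nat.floor_le (div_nonneg hx hw.le))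
  · have := (div_lt_iff₀ hw).1 (Nat.lt_floor_add_one (x / w))
    linarith

lemma mul_ceil_div_add_one_le {L w : ℝ} (hL : 0 ≤ L) (hw : 0 < w) (hw₁ : w ≤ 1) :
    w * (⌈L / w⌉₊ + 1) ≤ L + 2 := by
  have hceil := Nat.ceil_lt_add_one (div_nonneg hL hw.le)
  have hwL : w * (L / w) = L := mul_div_cancel₀ _ hw.ne'
  nlinarith

/-- The grid of boxes of width `δ ^ (1 / H)` and height `δ` has `O(δ ^ (-1 / H - 1))` boxes,
each of `ϱ_H`-diameter `δ`. -/
lemma pNull_of_subset_Icc_prod_Icc (hH : 0 < H) {a b L : ℝ} (hL : 0 ≤ L)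
    (hA : A ⊆ Icc a (a + L) ×ˢ Icc b (b + L)) : pNull H (1 / H + 2) A := by
  refine pNull_of_forall_finset_cover (ι := ℕ × ℕ) (by positivity) fun ε hε => ?_
  have hsmall : ∀ᶠ δ in 𝓝 (0 : ℝ), δ ≤ 1 ∧ δ ≤ ε ∧ (L + 2) ^ 2 * δ < ε :=
    (ge_mem_nhds one_pos).and <| (ge_mem_nhds hε).and <|
      ((continuous_const_mul _).tendsto' 0 0 (mul_zero _)).eventually (gt_mem_nhds hε)
  obtain ⟨δ, ⟨hδ₁, hδε, hδL⟩, hδ⟩ :=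
    ((hsmall.filter_mono nhdsWithin_le_nhds).and self_mem_nhdsWithin).exists (f := 𝓝[>] 0)
  set w := δ ^ (1 / H)
  have hw : 0 < w := Real.rpow_pos_of_pos hδ _
  have hwH : w ^ H = δ := by
    rw [← Real.rpow_mul hδ.le, one_div_mul_cancel hH.ne', Real.rpow_one]
  have hw₁ : w ≤ 1 := Real.rpow_le_one hδ.le hδ₁ (by positivity)
  set box : ℕ × ℕ → Set (ℝ × ℝ) := fun ij =>
    Icc (a + ij.1 * w) (a + ij.1 * w + w) ×ˢ Icc (b + ij.2 * δ) (b + ij.2 * δ + δ)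
  have hdiam : ∀ ij, pDiam H (box ij) ≤ ENNReal.ofReal δ := fun ij => by
    simpa only [hwH, max_self] using
      pDiam_Icc_prod_Icc_le hH.le (a + ij.1 * w) (b + ij.2 * δ) w δ
  refine ⟨Finset.range (⌈L / w⌉₊ + 1) ×ˢ Finset.range (⌈L / δ⌉₊ + 1), box, ?_,
    fun ij _ => (hdiam ij).trans (ENNReal.ofReal_le_ofReal hδε), ?_⟩
  · rintro p hp
    obtain ⟨⟨hp₁, hp₁'⟩, hp₂, hp₂'⟩ := hA hp
    obtain ⟨i, hi, hpi, hpi'⟩ :=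
      exists_mem_range_mem_Icc_mul hw (sub_nonneg.2 hp₁) (by linarith : p.1 - a ≤ L)
    obtain ⟨j, hj, hpj, hpj'⟩ :=
      exists_mem_range_mem_Icc_mul hδ (sub_nonneg.2 hp₂) (by linarith : p.2 - b ≤ L)
    exact mem_iUnion₂.2 ⟨(i, j), Finset.mem_product.2 ⟨hi, hj⟩,
      ⟨by constructor <;> linarith, by constructor <;> linarith⟩⟩
  · have hcount : ((⌈L / w⌉₊ + 1) * (⌈L / δ⌉₊ + 1) : ℝ) * δ ^ (1 / H + 2) ≤ (L + 2) ^ 2 * δ :=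
      calc ((⌈L / w⌉₊ + 1) * (⌈L / δ⌉₊ + 1) : ℝ) * δ ^ (1 / H + 2)
          = (w * (⌈L / w⌉₊ + 1)) * (δ * (⌈L / δ⌉₊ + 1)) * δ := by
            rw [Real.rpow_add hδ, Real.rpow_two]; ring
        _ ≤ (L + 2) * (L + 2) * δ := by
            gcongr
            exacts [mul_ceil_div_add_one_le hL hw hw₁, mul_ceil_div_add_one_le hL hδ hδ₁]
        _ = (L + 2) ^ 2 * δ := by ring
    calc ∑ ij ∈ _, pDiam H (box ij) ^ (1 / H + 2)
        ≤ ∑ _ ∈ Finset.range (⌈L / w⌉₊ + 1) ×ˢ Finset.range (⌈L / δ⌉₊ + 1),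
            ENNReal.ofReal (δ ^ (1 / H + 2)) := Finset.sum_le_sum fun ij _ => by
          rw [← ENNReal.ofReal_rpow_of_pos hδ]
          gcongr
          exact hdiam ij
      _ = ENNReal.ofReal (((⌈L / w⌉₊ + 1) * (⌈L / δ⌉₊ + 1) : ℝ) * δ ^ (1 / H + 2)) := by
          rw [Finset.sum_const, Finset.card_product, Finset.card_range, Finset.card_range,
            nsmul_eq_mul, ENNReal.ofReal_mul (by positivity)]
          norm_cast
      _ < ENNReal.ofReal ε := (ENNReal.ofReal_lt_ofReal_iff hε).2 (hcount.trans_lt hδL)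

lemma pNull_of_isBounded (hH : 0 < H) (hA : Bornology.IsBounded A) : pNull H (1 / H + 2) A := by
  obtain ⟨R, hR, hAR⟩ := hA.subset_closedBall_lt 0 0
  refine pNull_of_subset_Icc_prod_Icc hH (a := -R) (b := -R) (L := 2 * R) (by linarith)
    fun p hp => ?_
  have hp := mem_closedBall_zero_iff.1 (hAR hp)
  have h₁ := abs_le.1 ((norm_fst_le p).trans hp)
  have h₂ := abs_le.1 ((norm_snd_le p).trans hp)
  exact ⟨⟨by linarith, by linarith⟩, by linarith, by linarith⟩

end ParabolicNull

section ParabolicDimension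

variable {H s : ℝ} {A B : Set (ℝ × ℝ)}

lemma pDimH_nonneg : 0 ≤ pDimH H A :=
  Real.sInf_nonneg fun _ hs => hs.1

lemma pDimH_le_of_pNull (hs : 0 ≤ s) (h : pNull H s A) : pDimH H A ≤ s :=
  csInf_le ⟨0, fun _ hs => hs.1⟩ ⟨hs, h⟩

lemma pDimH_mono (hAB : A ⊆ B) (hB : ∃ s, 0 ≤ s ∧ pNull H s B) : pDimH H A ≤ pDimH H B :=
  csInf_le_csInf ⟨0, fun _ hs => hs.1⟩ hB fun _ ⟨hs, hsB⟩ => ⟨hs, hsB.mono hAB⟩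

end ParabolicDimension

def ParabolicHolderOn (H K γ : ℝ) (Φ : ℝ × ℝ → ℝ × ℝ) (A : Set (ℝ × ℝ)) : Prop :=
  ∀ p ∈ A, ∀ q ∈ A, pDist H p q ≤ 1 → pDist H (Φ p) (Φ q) ≤ K * pDist H p q ^ γ

namespace ParabolicHolderOn

variable {H K γ s : ℝ} {Φ : ℝ × ℝ → ℝ × ℝ} {A : Set (ℝ × ℝ)}

lemma pDiam_image_inter_le (hΦ : ParabolicHolderOn H K γ Φ A) (hK : 0 ≤ K) (hγ : 0 ≤ γ)
    {U : Set (ℝ × ℝ)} (hU : pDiam H U ≤ 1) :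
    pDiam H (Φ '' (A ∩ U)) ≤ ENNReal.ofReal K * pDiam H U ^ γ := by
  refine pDiam_le_of_forall ?_
  rintro _ ⟨p, ⟨hpA, hpU⟩, rfl⟩ _ ⟨q, ⟨hqA, hqU⟩, rfl⟩
  have hpq : ENNReal.ofReal (pDist H p q) ≤ pDiam H U := ofReal_pDist_le_pDiam hpU hqU
  calc ENNReal.ofReal (pDist H (Φ p) (Φ q))
      ≤ ENNReal.ofReal (K * pDist H p q ^ γ) :=
        ENNReal.ofReal_le_ofReal (hΦ p hpA q hqA (ENNReal.ofReal_le_one.1 (hpq.trans hU)))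
    _ = ENNReal.ofReal K * ENNReal.ofReal (pDist H p q) ^ γ := by
        rw [ENNReal.ofReal_mul hK, ENNReal.ofReal_rpow_of_nonneg (pDist_nonneg p q) hγ]
    _ ≤ ENNReal.ofReal K * pDiam H U ^ γ := by gcongr

lemma pNull_image (hΦ : ParabolicHolderOn H K γ Φ A) (hK : 0 ≤ K) (hγ : 0 < γ) (hs : 0 ≤ s)
    (h : pNull H s A) : pNull H (s / γ) (Φ '' A) := by
  intro ε hε
  have hsγ : 0 ≤ s / γ := div_nonneg hs hγ.le
  have hsmall : ∀ᶠ δ in 𝓝 (0 : ℝ), δ ≤ 1 ∧ K * δ ^ γ < ε ∧ K ^ (s / γ) * δ < ε :=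
    (ge_mem_nhds one_pos).and <|
      ((((Real.continuous_rpow_const hγ.le).const_mul K).tendsto' 0 0
        (by simp [Real.zero_rpow hγ.ne'])).eventually (gt_mem_nhds hε)).and <|
      ((continuous_const_mul _).tendsto' 0 0 (mul_zero _)).eventually (gt_mem_nhds hε)
  obtain ⟨δ, ⟨hδ₁, hKδ, hKδ'⟩, hδ⟩ :=
    ((hsmall.filter_mono nhdsWithin_le_nhds).and self_mem_nhdsWithin).exists (f := 𝓝[>] 0)
  obtain ⟨U, hcov, hdiam, hsum⟩ := h δ hδ
  have hV : ∀ n, pDiam H (Φ '' (A ∩ U n)) ≤ ENNReal.ofReal K * pDiam H (U n) ^ γ := fun n =>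
    hΦ.pDiam_image_inter_le hK hγ.le ((hdiam n).trans (ENNReal.ofReal_le_one.2 hδ₁))
  refine ⟨fun n => Φ '' (A ∩ U n), ?_, fun n => ?_, ?_⟩
  · rintro _ ⟨p, hp, rfl⟩
    obtain ⟨n, hn⟩ := mem_iUnion.1 (hcov hp)
    exact mem_iUnion.2 ⟨n, mem_image_of_mem Φ ⟨hp, hn⟩⟩
  · calc pDiam H (Φ '' (A ∩ U n)) ≤ ENNReal.ofReal K * pDiam H (U n) ^ γ := hV n
      _ ≤ ENNReal.ofReal K * ENNReal.ofReal δ ^ γ := by gcongr; exact hdiam n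
      _ = ENNReal.ofReal (K * δ ^ γ) := by
          rw [ENNReal.ofReal_rpow_of_pos hδ, ENNReal.ofReal_mul hK]
      _ ≤ ENNReal.ofReal ε := ENNReal.ofReal_le_ofReal hKδ.le
  · have hterm : ∀ n, pDiam H (Φ '' (A ∩ U n)) ^ (s / γ) ≤
        ENNReal.ofReal (K ^ (s / γ)) * pDiam H (U n) ^ s := fun n =>
      calc pDiam H (Φ '' (A ∩ U n)) ^ (s / γ)
          ≤ (ENNReal.ofReal K * pDiam H (U n) ^ γ) ^ (s / γ) := by gcongr; exact hV n
        _ = ENNReal.ofReal (K ^ (s / γ)) * pDiam H (U n) ^ s := by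
          rw [ENNReal.mul_rpow_of_nonneg _ _ hsγ, ← ENNReal.rpow_mul, mul_div_cancel₀ _ hγ.ne',
            ENNReal.ofReal_rpow_of_nonneg hK hsγ]
    calc ∑' n, pDiam H (Φ '' (A ∩ U n)) ^ (s / γ)
        ≤ ∑' n, ENNReal.ofReal (K ^ (s / γ)) * pDiam H (U n) ^ s := ENNReal.tsum_le_tsum hterm
      _ = ENNReal.ofReal (K ^ (s / γ)) * ∑' n, pDiam H (U n) ^ s := ENNReal.tsum_mul_left
      _ ≤ ENNReal.ofReal (K ^ (s / γ)) * ENNReal.ofReal δ := by gcongr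
      _ = ENNReal.ofReal (K ^ (s / γ) * δ) := (ENNReal.ofReal_mul (by positivity)).symm
      _ < ENNReal.ofReal ε := (ENNReal.ofReal_lt_ofReal_iff hε).2 hKδ'

lemma pDimH_image_le (hΦ : ParabolicHolderOn H K γ Φ A) (hK : 0 ≤ K) (hγ : 0 < γ)
    (hA : ∃ s, 0 ≤ s ∧ pNull H s A) : γ * pDimH H (Φ '' A) ≤ pDimH H A :=
  le_csInf hA fun s ⟨hs, hsA⟩ =>
    calc γ * pDimH H (Φ '' A) ≤ γ * (s / γ) := by
          gcongr
          exact pDimH_le_of_pNull (div_nonneg hs hγ.le) (hΦ.pNull_image hK hγ hs hsA)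
      _ = s := mul_div_cancel₀ _ hγ.ne'

end ParabolicHolderOn

section Graph

variable {H : ℝ} {f g : ℝ → ℝ} {V : Set ℝ}

lemma graphP_eq_image (f : ℝ → ℝ) (V : Set ℝ) : graphP f V = (fun u => (u, f u)) '' V := by
  ext p
  simp [graphP, eq_comm]

lemma graphP_mono {W : Set ℝ} (hVW : V ⊆ W) : graphP g V ⊆ graphP g W := by
  simpa only [graphP_eq_image] using image_mono hVW

lemma graphP_eq_image_graphP (f g : ℝ → ℝ) (V : Set ℝ) :
    graphP f V = (fun p => (p.1, f p.1)) '' graphP g V := by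
  simp only [graphP_eq_image, image_image]

lemma isBounded_graphP_Icc (hg : Continuous g) (a b : ℝ) :
    Bornology.IsBounded (graphP g (Icc a b)) := by
  rw [graphP_eq_image]
  exact (isCompact_Icc.image (continuous_id.prodMk hg)).isBounded

lemma parabolicHolderOn_graphP {C γ : ℝ} (hC : 0 ≤ C) (hγ : 0 < γ) (hγ₁ : γ ≤ 1)
    (hfg : ∀ u ∈ V, ∀ v ∈ V, |f u - f v| ≤ C * |u - v| ^ (H * γ) + C * |g u - g v|) :
    ParabolicHolderOn H (1 + 2 * C) γ (fun p => (p.1, f p.1)) (graphP g V) := by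
  rintro _ ⟨u, hu, rfl⟩ _ ⟨v, hv, rfl⟩ hd₁
  set d := pDist H (u, g u) (v, g v)
  have hd : 0 ≤ d := pDist_nonneg _ _
  -- at scales `d ≤ 1` the Lipschitz parts are dominated by the Hölder ones
  have hdγ : d ≤ d ^ γ := Real.self_le_rpow_of_le_one hd hd₁ hγ₁
  have huv : |u - v| ^ H ≤ d := le_max_left _ _
  have hguv : |g u - g v| ≤ d := le_max_right _ _
  have hfuv : |f u - f v| ≤ C * d ^ γ + C * d := by
    refine (hfg u hu v hv).trans (add_le_add (mul_le_mul_of_nonneg_left ?_ hC) ?_)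
    · rw [Real.rpow_mul (abs_nonneg _)]
      exact Real.rpow_le_rpow (Real.rpow_nonneg (abs_nonneg _) _) huv hγ.le
    · exact mul_le_mul_of_nonneg_left hguv hC
  have hdγ₀ : 0 ≤ d ^ γ := Real.rpow_nonneg hd _
  exact max_le (by nlinarith) (by nlinarith [mul_le_mul_of_nonneg_left hdγ hC])

end Graph

section LocalDimension

variable {H t : ℝ} {f g : ℝ → ℝ}

lemma pDimGraphLoc_le {ρ : ℝ} (hρ : 0 < ρ) :
    pDimGraphLoc H f t ≤ pDimH H (graphP f (Icc (t - ρ) (t + ρ))) :=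
  csInf_le ⟨0, by rintro _ ⟨_, _, rfl⟩; exact pDimH_nonneg⟩ ⟨ρ, hρ, rfl⟩

lemma le_pDimGraphLoc {c : ℝ} (h : ∀ ρ > 0, c ≤ pDimH H (graphP g (Icc (t - ρ) (t + ρ)))) :
    c ≤ pDimGraphLoc H g t :=
  le_csInf ⟨_, 1, one_pos, rfl⟩ fun _ ⟨ρ, hρ, hx⟩ => hx ▸ h ρ hρ

end LocalDimension

lemma le_of_forall_mem_Ioo_mul_le {x y : ℝ} (h : ∀ γ ∈ Ioo (0 : ℝ) 1, γ * x ≤ y) : x ≤ y :=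
  le_of_tendsto (((continuous_mul_const x).tendsto' 1 x (one_mul x)).mono_left
    nhdsWithin_le_nhds) (eventually_of_mem (Ioo_mem_nhdsLT zero_lt_one) h)

theorem stmt_11_general (f g : ℝ → ℝ) (hg : Continuous g) (t H : ℝ)
    (hH0 : 0 < H)
    (hbound : ∀ ε : ℝ, 0 < ε → ε < H → ∃ C > (0 : ℝ), ∃ ρ > (0 : ℝ),
      ∀ u ∈ Metric.ball t ρ, ∀ v ∈ Metric.ball t ρ,
        |f u - f v| ≤ C * |u - v| ^ (H - ε) + C * |g u - g v|) :
    pDimGraphLoc H f t ≤ pDimGraphLoc H g t := by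
  have hgraph : ∀ ρ, ∃ s, 0 ≤ s ∧ pNull H s (graphP g (Icc (t - ρ) (t + ρ))) := fun ρ =>
    ⟨_, by positivity, pNull_of_isBounded hH0 (isBounded_graphP_Icc hg _ _)⟩
  refine le_pDimGraphLoc fun ρ hρ => le_of_forall_mem_Ioo_mul_le fun γ ⟨hγ, hγ₁⟩ => ?_
  obtain ⟨C, hC, r, hr, hfg⟩ := hbound (H * (1 - γ)) (by nlinarith) (by nlinarith)
  obtain ⟨r', hr', hr'r, hr'ρ⟩ : ∃ r', 0 < r' ∧ r' < r ∧ r' ≤ ρ :=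
    ⟨min r ρ / 2, by positivity, by linarith [min_le_left r ρ], by linarith [min_le_right r ρ]⟩
  have hball : Icc (t - r') (t + r') ⊆ Metric.ball t r := fun u hu => by
    rw [Metric.mem_ball, Real.dist_eq, abs_sub_lt_iff]
    exact ⟨by linarith [hu.2], by linarith [hu.1]⟩
  have hΦ : ParabolicHolderOn H (1 + 2 * C) γ (fun p => (p.1, f p.1))
      (graphP g (Icc (t - r') (t + r'))) :=
    parabolicHolderOn_graphP hC.le hγ hγ₁.le fun u hu v hv => by
      simpa only [show H - H * (1 - γ) = H * γ by ring] using
        hfg u (hball hu) v (hball hv)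
  calc γ * pDimGraphLoc H f t ≤ γ * pDimH H (graphP f (Icc (t - r') (t + r'))) := by
        gcongr; exact pDimGraphLoc_le hr'
    _ ≤ pDimH H (graphP g (Icc (t - r') (t + r'))) := by
        rw [graphP_eq_image_graphP f g]
        exact hΦ.pDimH_image_le (by positivity) hγ (hgraph r')
    _ ≤ pDimH H (graphP g (Icc (t - ρ) (t + ρ))) :=
        pDimH_mono (graphP_mono (Icc_subset_Icc (by linarith) (by linarith))) (hgraph ρ)

/-- If for every `ε ∈ (0,H)` one has `|f u − f v| ≤ C_ε |u−v|^{H−ε} + C_ε |g u − g v|` near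
`t`, then the local parabolic Hausdorff dimension of the graph of `f` at `t` is at most that
of the graph of `g`. -/
theorem stmt_11 (f g : ℝ → ℝ) (hf : Continuous f) (hg : Continuous g) (t H : ℝ)
    (hH0 : 0 < H) (hH1 : H ≤ 1)
    (hbound : ∀ ε : ℝ, 0 < ε → ε < H → ∃ C > (0 : ℝ), ∃ ρ > (0 : ℝ),
      ∀ u ∈ Metric.ball t ρ, ∀ v ∈ Metric.ball t ρ,
        |f u - f v| ≤ C * |u - v| ^ (H - ε) + C * |g u - g v|) :
    pDimGraphLoc H f t ≤ pDimGraphLoc H g t :=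
  stmt_11_general f g hg t H hH0 hbound
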